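/- arXiv:1709.04892 — 3 statements merged into one kernel-verified Lean document; each statement's English description precedes it below -/
import Mathlib

section
/- There exists a set-valued preconvexlike function that is not convexlike: let Y₊ be the first quadrant of ℝ², let D = (Y₊ \ [0,1]×[0,1]) ∪ {(0,1),(1,0)}, and define f : ℝ² → 2^{ℝ²} by f(x) = D for all x. Then f is Y₊-preconvexlike on D but not Y₊-convexlike on D. -/
open Pointwise

/-- A set-valued preconvexlike function that is not convexlike (Example 1.1). -/
theorem stmt_2
    (Yp : Set (ℝ × ℝ)) (hYp : Yp = {p : ℝ × ℝ | 0 ≤ p.1 ∧ 0 ≤ p.2})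
    (D : Set (ℝ × ℝ))
    (hD : D = (Yp \ Set.Icc ((0 : ℝ), (0 : ℝ)) ((1 : ℝ), (1 : ℝ))) ∪ {((0:ℝ),(1:ℝ)), ((1:ℝ),(0:ℝ))})
    (f : ℝ × ℝ → Set (ℝ × ℝ)) (hf : ∀ x, f x = D) :
    (∀ x1 ∈ D, ∀ x2 ∈ D, ∀ α ∈ Set.Ioo (0:ℝ) 1,
      ∃ x3 ∈ D, ∃ τ : ℝ, 0 < τ ∧ α • f x1 + (1 - α) • f x2 ⊆ τ • f x3 + Yp) ∧
    ¬ (∀ x1 ∈ D, ∀ x2 ∈ D, ∀ α ∈ Set.Icc (0:ℝ) 1,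
      ∃ x3 ∈ D, α • f x1 + (1 - α) • f x2 ⊆ f x3 + Yp) := by
  have h01 : ((0:ℝ),(1:ℝ)) ∈ D := by rw [hD]; right; left; rfl
  have h10 : ((1:ℝ),(0:ℝ)) ∈ D := by rw [hD]; right; right; rfl
  have key : ∀ d ∈ D, 0 ≤ d.1 ∧ 0 ≤ d.2 ∧ 1 ≤ d.1 + d.2 := by
    intro d hd
    rw [hD] at hd
    rcases hd with ⟨hY, hno⟩ | hd
    · rw [hYp] at hY
      obtain ⟨hd1, hd2⟩ := hY
      refine ⟨hd1, hd2, ?_⟩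
      rw [Set.mem_Icc] at hno
      push_neg at hno
      have := hno ⟨hd1, hd2⟩
      rw [Prod.le_def] at this
      push_neg at this
      norm_num at this
      rcases le_or_gt d.1 1 with h | h
      · have := this h
        linarith
      · linarith
    · rcases hd with rfl | rfl <;> norm_num
  constructor
  · intro x1 _ x2 _ α hα
    obtain ⟨hα0, hα1⟩ := hα
    refine ⟨((0:ℝ),(1:ℝ)), h01, 1/2, by norm_num, ?_⟩
    rw [hf, hf, hf]
    rintro p ⟨a, ha, b, hb, rfl⟩
    obtain ⟨d1, hd1, rfl⟩ := ha
    obtain ⟨d2, hd2, rfl⟩ := hb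
    obtain ⟨h11, h12, h1s⟩ := key d1 hd1
    obtain ⟨h21, h22, h2s⟩ := key d2 hd2
    set p := α • d1 + (1 - α) • d2 with hp
    have hp1 : p.1 = α * d1.1 + (1 - α) * d2.1 := rfl
    have hp2 : p.2 = α * d1.2 + (1 - α) * d2.2 := rfl
    have hp1nn : 0 ≤ p.1 := by rw [hp1]; nlinarith
    have hp2nn : 0 ≤ p.2 := by rw [hp2]; nlinarith
    have hsum : 1 ≤ p.1 + p.2 := by rw [hp1, hp2]; nlinarith
    rcases le_or_gt (1/2 : ℝ) p.1 with h | h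
    · refine ⟨(1/2 : ℝ) • ((1:ℝ),(0:ℝ)), Set.smul_mem_smul_set h10,
        (p.1 - 1/2, p.2), ?_, ?_⟩
      · rw [hYp]; constructor <;> simp <;> linarith
      · apply Prod.ext <;> simp <;> linarith
    · refine ⟨(1/2 : ℝ) • ((0:ℝ),(1:ℝ)), Set.smul_mem_smul_set h01,
        (p.1, p.2 - 1/2), ?_, ?_⟩
      · rw [hYp]; constructor <;> simp <;> linarith
      · apply Prod.ext <;> simp <;> linarith
  · intro h
    obtain ⟨x3, hx3, hsub⟩ := h ((0:ℝ),(1:ℝ)) h01 ((0:ℝ),(1:ℝ)) h01 (1/2)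
      ⟨by norm_num, by norm_num⟩
    have hmem : ((1/2 : ℝ), (1/2 : ℝ)) ∈ (1/2 : ℝ) • f ((0:ℝ),(1:ℝ)) +
        (1 - 1/2 : ℝ) • f ((0:ℝ),(1:ℝ)) := by
      rw [hf]
      refine ⟨(1/2 : ℝ) • ((1:ℝ),(0:ℝ)), Set.smul_mem_smul_set h10,
        (1 - 1/2 : ℝ) • ((0:ℝ),(1:ℝ)), Set.smul_mem_smul_set h01, ?_⟩
      apply Prod.ext <;> norm_num
    have := hsub hmem
    rw [hf] at this
    obtain ⟨d, hd, y, hy, heq⟩ := this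
    rw [hYp] at hy
    obtain ⟨hy1, hy2⟩ := hy
    have he1 : d.1 + y.1 = 1/2 := congrArg Prod.fst heq
    have he2 : d.2 + y.2 = 1/2 := congrArg Prod.snd heq
    rw [hD] at hd
    rcases hd with ⟨hY, hno⟩ | hd
    · rw [hYp] at hY
      obtain ⟨hd1, hd2⟩ := hY
      apply hno
      rw [Set.mem_Icc, Prod.le_def, Prod.le_def]
      refine ⟨⟨hd1, hd2⟩, ?_, ?_⟩ <;> simp <;> linarith
    · rcases hd with rfl | rfl <;> simp at he1 he2 <;> linarith
end

section
/- Farkas–Minkowski alternative theorem (second direction): if there exist ξ ∈ Y₊* with ξ ≠ 0, η ∈ Z₊*, ζ ∈ W* such that ξ(y) + η(z) + ζ(w) ≥ 0 for all x ∈ D, y ∈ f(x), z ∈ g(x), w ∈ h(x), then there is no x⁰ ∈ D satisfying f(x⁰) ∩ (−int Y₊) ≠ ∅, g(x⁰) ∩ (−Z₊) ≠ ∅, and 0 ∈ h(x⁰). -/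
open Pointwise

theorem ContinuousLinearMap.pos_of_mem_interior_of_nonneg {R E : Type*} [Field R] [LinearOrder R]
    [IsStrictOrderedRing R] [TopologicalSpace R] [OrderTopology R]
    [AddCommGroup E] [TopologicalSpace E] [ContinuousAdd E] [Module R E] [ContinuousSMul R E]
    {f : StrongDual R E} (hf : f ≠ 0) {s : Set E} (hs : ∀ y ∈ s, 0 ≤ f y) {u : E}
    (hu : u ∈ interior s) : 0 < f u := by
  have himage : f '' interior s ⊆ interior (Set.Ici 0) :=
    interior_maximal (Set.image_subset_iff.2 fun y hy => hs y (interior_subset hy))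
      (f.isOpenMap_of_ne_zero hf _ isOpen_interior)
  rw [interior_Ici] at himage
  exact himage (Set.mem_image_of_mem f hu)

theorem stmt_5_general {X Y Z W : Type*}
    [AddCommGroup Y] [Module ℝ Y] [TopologicalSpace Y] [IsTopologicalAddGroup Y]
    [ContinuousSMul ℝ Y]
    [AddCommGroup Z] [Module ℝ Z] [TopologicalSpace Z]
    [AddCommGroup W] [Module ℝ W] [TopologicalSpace W]
    (D : Set X)
    (Yp : Set Y) (Zp : Set Z)
    (f : X → Set Y) (g : X → Set Z) (h : X → Set W)
    (ξ : Y →L[ℝ] ℝ) (η : Z →L[ℝ] ℝ) (ζ : W →L[ℝ] ℝ)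
    (hξ : ∀ y ∈ Yp, 0 ≤ ξ y) (hξ0 : ξ ≠ 0) (hη : ∀ z ∈ Zp, 0 ≤ η z)
    (hsol : ∀ x ∈ D, ∀ y ∈ f x, ∀ z ∈ g x, ∀ w ∈ h x, 0 ≤ ξ y + η z + ζ w) :
    ¬ ∃ x0 ∈ D, (f x0 ∩ (-(interior Yp))).Nonempty ∧
      (g x0 ∩ (-Zp)).Nonempty ∧ (0 : W) ∈ h x0 := by
  rintro ⟨x0, hx0, ⟨y, hyf, hy⟩, ⟨z, hzg, hz⟩, hw⟩
  have hξy : 0 < ξ (-y) := ξ.pos_of_mem_interior_of_nonneg hξ0 hξ hy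
  have hηz : 0 ≤ η (-z) := hη _ hz
  have hsum := hsol x0 hx0 y hyf z hzg 0 hw
  simp only [map_neg, map_zero, add_zero] at hξy hηz hsum
  linarith

/-- Farkas–Minkowski alternative theorem, second direction (Theorem 1.2):
if system (ii) has a solution with `ξ ≠ 0`, then system (i) has no solution. -/
theorem stmt_5 {X Y Z W : Type*}
    [AddCommGroup Y] [Module ℝ Y] [TopologicalSpace Y] [IsTopologicalAddGroup Y]
    [ContinuousSMul ℝ Y]
    [AddCommGroup Z] [Module ℝ Z] [TopologicalSpace Z] [IsTopologicalAddGroup Z]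
    [ContinuousSMul ℝ Z]
    [AddCommGroup W] [Module ℝ W] [TopologicalSpace W] [IsTopologicalAddGroup W]
    [ContinuousSMul ℝ W]
    (D : Set X)
    (Yp : Set Y) (Zp : Set Z)
    (hYcone : ∀ y1 ∈ Yp, ∀ y2 ∈ Yp, ∀ a b : ℝ, 0 ≤ a → 0 ≤ b → a • y1 + b • y2 ∈ Yp)
    (hZcone : ∀ z1 ∈ Zp, ∀ z2 ∈ Zp, ∀ a b : ℝ, 0 ≤ a → 0 ≤ b → a • z1 + b • z2 ∈ Zp)
    (hYint : (interior Yp).Nonempty)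
    (f : X → Set Y) (g : X → Set Z) (h : X → Set W)
    (ξ : Y →L[ℝ] ℝ) (η : Z →L[ℝ] ℝ) (ζ : W →L[ℝ] ℝ)
    (hξ : ∀ y ∈ Yp, 0 ≤ ξ y) (hξ0 : ξ ≠ 0) (hη : ∀ z ∈ Zp, 0 ≤ η z)
    (hsol : ∀ x ∈ D, ∀ y ∈ f x, ∀ z ∈ g x, ∀ w ∈ h x, 0 ≤ ξ y + η z + ζ w) :
    ¬ ∃ x0 ∈ D, (f x0 ∩ (-(interior Yp))).Nonempty ∧
      (g x0 ∩ (-Zp)).Nonempty ∧ (0 : W) ∈ h x0 :=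
  stmt_5_general D Yp Zp f g h ξ η ζ hξ hξ0 hη hsol
end

section
/- In the setting of the vector saddle-point characterization: if for all z ∈ g(x̄) and all positive operators S ∈ B⁺(Z,Y) one has S(z) − S̄(z̄) ∉ int Y₊ (where z̄ ∈ g(x̄) is fixed and S̄ ∈ B⁺(Z,Y)), and Z₊, Y₊ are closed pointed convex cones with nonempty interiors in locally convex spaces, then −g(x̄) ⊆ Z₊. -/
/-! If `-z ∉ Z₊`, Farkas' lemma (Hahn–Banach for closed cones) gives `φ ≥ 0` on `Z₊` with
`φ z > 0`. An interior point `y₀` of `Y₊` is an order unit, so `r • y₀ - S̄ z̄ ∈ int Y₊` for some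
`r > 0`, and the positive rank-one operator `w ↦ (φ w / φ z) • r • y₀` sends `z` to `r • y₀`,
contradicting the saddle-point inequality. -/

open Pointwise

namespace PointedCone

open Filter Topology

variable {E : Type*} [AddCommGroup E] [Module ℝ E] [TopologicalSpace E]

lemma smul_mem_interior [ContinuousConstSMul ℝ E] (C : PointedCone ℝ E) {r : ℝ} (hr : 0 < r)
    {x : E} (hx : x ∈ interior (C : Set E)) : r • x ∈ interior (C : Set E) := by
  have hsub : r • (C : Set E) ⊆ C := Set.smul_set_subset_iff.2 fun _ hy ↦ C.smul_mem hr.le hy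
  exact interior_mono hsub <| (interior_smul₀ hr.ne' (C : Set E)).symm ▸ Set.smul_mem_smul_set hx

lemma exists_smul_sub_mem_interior [IsTopologicalAddGroup E] [ContinuousSMul ℝ E]
    (C : PointedCone ℝ E) {x : E} (hx : x ∈ interior (C : Set E)) (y : E) :
    ∃ r : ℝ, 0 < r ∧ r • x - y ∈ interior (C : Set E) := by
  have hcont : Continuous fun s : ℝ ↦ x - s • y := by fun_prop
  have hnear : ∀ᶠ s in 𝓝[>] (0 : ℝ), x - s • y ∈ interior (C : Set E) :=
    nhdsWithin_le_nhds <| hcont.continuousAt.preimage_mem_nhds <| by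
      simpa using isOpen_interior.mem_nhds hx
  obtain ⟨s, hs, hs0⟩ := (hnear.and self_mem_nhdsWithin).exists
  refine ⟨s⁻¹, inv_pos.2 hs0, ?_⟩
  simpa [smul_sub, smul_smul, inv_mul_cancel₀ hs0.ne'] using C.smul_mem_interior (inv_pos.2 hs0) hs

end PointedCone

section RankOne

variable {Y Z : Type*} [AddCommGroup Y] [Module ℝ Y] [TopologicalSpace Y] [ContinuousSMul ℝ Y]
  [AddCommGroup Z] [Module ℝ Z] [TopologicalSpace Z]

lemma exists_nonneg_clm_apply_eq {D : Set Z} (C : PointedCone ℝ Y) (φ : StrongDual ℝ Z)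
    (hφ : ∀ w ∈ D, 0 ≤ φ w) {z : Z} (hz : 0 < φ z) {y : Y} (hy : y ∈ C) :
    ∃ S : Z →L[ℝ] Y, (∀ w ∈ D, S w ∈ C) ∧ S z = y := by
  refine ⟨φ.smulRight ((φ z)⁻¹ • y), fun w hw ↦ ?_, ?_⟩
  · exact C.smul_mem (hφ w hw) (C.smul_mem (inv_nonneg.2 hz.le) hy)
  · simp [smul_smul, mul_inv_cancel₀ hz.ne']

end RankOne

theorem stmt_9_general {X Y Z : Type*}
    [AddCommGroup Y] [Module ℝ Y] [TopologicalSpace Y] [IsTopologicalAddGroup Y]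
    [ContinuousSMul ℝ Y]
    [AddCommGroup Z] [Module ℝ Z] [TopologicalSpace Z] [IsTopologicalAddGroup Z]
    [ContinuousSMul ℝ Z] [LocallyConvexSpace ℝ Z]
    (Yp : Set Y) (Zp : Set Z)
    (hYcone : ∀ y1 ∈ Yp, ∀ y2 ∈ Yp, ∀ a b : ℝ, 0 ≤ a → 0 ≤ b → a • y1 + b • y2 ∈ Yp)
    (hZcone : ∀ z1 ∈ Zp, ∀ z2 ∈ Zp, ∀ a b : ℝ, 0 ≤ a → 0 ≤ b → a • z1 + b • z2 ∈ Zp)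
    (hZclosed : IsClosed Zp)
    (hYint : (interior Yp).Nonempty) (hZint : (interior Zp).Nonempty)
    (g : X → Set Z) (xbar : X)
    (Sbar : Z →L[ℝ] Y)
    (zbar : Z)
    (hsaddle : ∀ z ∈ g xbar, ∀ S : Z →L[ℝ] Y, (∀ z' ∈ Zp, S z' ∈ Yp) →
      S z - Sbar zbar ∉ interior Yp) :
    ∀ z ∈ g xbar, -z ∈ Zp := by
  intro z hz
  by_contra hzZ
  let Zcone : ProperCone ℝ Z :=
    ⟨PointedCone.ofConeComb Zp (hZint.mono interior_subset)
      fun z1 h1 z2 h2 a ha b hb ↦ hZcone z1 h1 z2 h2 a b ha hb, hZclosed⟩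
  let Ycone : PointedCone ℝ Y :=
    PointedCone.ofConeComb Yp (hYint.mono interior_subset)
      fun y1 h1 y2 h2 a ha b hb ↦ hYcone y1 h1 y2 h2 a b ha hb
  obtain ⟨φ, hφ, hφz⟩ := Zcone.hyperplane_separation_point hzZ
  obtain ⟨y0, hy0⟩ := hYint
  obtain ⟨r, hr, hry⟩ := Ycone.exists_smul_sub_mem_interior hy0 (Sbar zbar)
  obtain ⟨S, hSpos, hSz⟩ := exists_nonneg_clm_apply_eq Ycone φ hφ
    (by simpa using hφz) (Ycone.smul_mem hr.le (interior_subset hy0))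
  exact hsaddle z hz S hSpos (hSz ▸ hry)

/-- Key step of Theorem 3.1: if `S z − S̄ z̄ ∉ int Y₊` for every `z ∈ g x̄` and every
positive operator `S`, then `−g(x̄) ⊆ Z₊`. -/
theorem stmt_9 {X Y Z : Type*}
    [AddCommGroup Y] [Module ℝ Y] [TopologicalSpace Y] [IsTopologicalAddGroup Y]
    [ContinuousSMul ℝ Y] [LocallyConvexSpace ℝ Y]
    [AddCommGroup Z] [Module ℝ Z] [TopologicalSpace Z] [IsTopologicalAddGroup Z]
    [ContinuousSMul ℝ Z] [LocallyConvexSpace ℝ Z]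
    (Yp : Set Y) (Zp : Set Z)
    (hYcone : ∀ y1 ∈ Yp, ∀ y2 ∈ Yp, ∀ a b : ℝ, 0 ≤ a → 0 ≤ b → a • y1 + b • y2 ∈ Yp)
    (hZcone : ∀ z1 ∈ Zp, ∀ z2 ∈ Zp, ∀ a b : ℝ, 0 ≤ a → 0 ≤ b → a • z1 + b • z2 ∈ Zp)
    (hYclosed : IsClosed Yp) (hZclosed : IsClosed Zp)
    (hYpointed : Yp ∩ (-Yp) = {0}) (hZpointed : Zp ∩ (-Zp) = {0})
    (hYint : (interior Yp).Nonempty) (hZint : (interior Zp).Nonempty)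
    (g : X → Set Z) (xbar : X)
    (Sbar : Z →L[ℝ] Y) (hSbar : ∀ z ∈ Zp, Sbar z ∈ Yp)
    (zbar : Z) (hzbar : zbar ∈ g xbar)
    (hsaddle : ∀ z ∈ g xbar, ∀ S : Z →L[ℝ] Y, (∀ z' ∈ Zp, S z' ∈ Yp) →
      S z - Sbar zbar ∉ interior Yp) :
    ∀ z ∈ g xbar, -z ∈ Zp :=
  stmt_9_general Yp Zp hYcone hZcone hZclosed hYint hZint g xbar Sbar zbar hsaddle
end
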